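/- arXiv:2311.01106 — 2 statements merged into one kernel-verified Lean document; each statement's English description precedes it below -/
import Mathlib

section
/- For the conditional risk of the asymmetric softmax loss with η ∈ Δ^K (all coordinates positive) and c ∈ (0,1), the excess conditional risk at any u satisfies R(u,η,c) − inf_v R(v,η,c) = KL(η ‖ ψ̃_{1:K}(u)) + kl(c ‖ ψ̃_{K+1}(u)), where kl(a‖b) = a log(a/b) + (1−a) log((1−a)/(1−b)). -/
/-- The asymmetric softmax function of Definition 2. -/
noncomputable def asoftmax (K : ℕ) (u : Fin (K + 1) → ℝ) (y : Fin (K + 1)) : ℝ :=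
  if y = Fin.last K then
    Real.exp (u y) /
      ((∑ y' : Fin (K + 1), Real.exp (u y')) - ⨆ y' : Fin K, Real.exp (u y'.castSucc))
  else Real.exp (u y) / ∑ y' : Fin K, Real.exp (u y'.castSucc)

/-- The conditional risk of the asymmetric softmax loss. -/
noncomputable def condRisk (K : ℕ) (η : Fin K → ℝ) (c : ℝ)
    (u : Fin (K + 1) → ℝ) : ℝ :=
  -(∑ y : Fin K, η y * Real.log (asoftmax K u y.castSucc))
    - (1 - c) * Real.log (1 - asoftmax K u (Fin.last K))
    - c * Real.log (asoftmax K u (Fin.last K))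

/-! The cross entropy of `(η, c)` against any `(p, q)` splits as the entropy `H(η) + h(c)` plus
`KL(η ‖ p) + kl(c ‖ q)`; Gibbs' inequality makes the divergence part nonnegative. For `K ≥ 2` the
asymmetric softmax takes values in the open simplex times `(0, 1)` and attains every such pair, in
particular `(η, c)`, so the infimum of the risk is exactly `H(η) + h(c)`. -/

open Finset Real

lemma sub_le_mul_log_div {a b : ℝ} (ha : 0 < a) (hb : 0 < b) : a - b ≤ a * log (a / b) := by
  have h := one_sub_inv_le_log_of_pos (div_pos ha hb)
  rw [inv_div] at h
  calc a - b = a * (1 - b / a) := by field_simp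
    _ ≤ a * log (a / b) := mul_le_mul_of_nonneg_left h ha.le

lemma sum_mul_log_div_nonneg {ι : Type*} (s : Finset ι) {η p : ι → ℝ}
    (hη : ∀ i ∈ s, 0 < η i) (hp : ∀ i ∈ s, 0 < p i) (hsum : ∑ i ∈ s, p i ≤ ∑ i ∈ s, η i) :
    0 ≤ ∑ i ∈ s, η i * log (η i / p i) :=
  calc 0 ≤ ∑ i ∈ s, (η i - p i) := by rw [sum_sub_distrib]; linarith
    _ ≤ ∑ i ∈ s, η i * log (η i / p i) :=
      sum_le_sum fun i hi => sub_le_mul_log_div (hη i hi) (hp i hi)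

lemma binary_mul_log_div_nonneg {c q : ℝ} (hc0 : 0 < c) (hc1 : c < 1) (hq0 : 0 < q) (hq1 : q < 1) :
    0 ≤ c * log (c / q) + (1 - c) * log ((1 - c) / (1 - q)) := by
  have h₀ := sub_le_mul_log_div hc0 hq0
  have h₁ := sub_le_mul_log_div (sub_pos.2 hc1) (sub_pos.2 hq1)
  linarith

lemma ciSup_lt_sum {ι : Type*} [Fintype ι] (hι : 1 < Fintype.card ι) {w : ι → ℝ}
    (hw : ∀ i, 0 < w i) : ⨆ i, w i < ∑ i, w i := by
  have : Nonempty ι := Fintype.card_pos_iff.1 (by omega)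
  obtain ⟨i, hi⟩ := exists_eq_ciSup_of_finite (f := w)
  obtain ⟨j, hji⟩ := Fintype.exists_ne_of_one_lt_card hι i
  rw [← hi]
  exact single_lt_sum hji (mem_univ i) (mem_univ j) (hw j) fun k _ _ => (hw k).le

noncomputable def bayesRisk (K : ℕ) (η : Fin K → ℝ) (c : ℝ) : ℝ :=
  -(∑ y, η y * log (η y)) - (1 - c) * log (1 - c) - c * log c

lemma cross_entropy_eq_bayesRisk_add {K : ℕ} {η p : Fin K → ℝ} {c q : ℝ}
    (hη : ∀ y, 0 < η y) (hp : ∀ y, 0 < p y) (hc0 : 0 < c) (hc1 : c < 1)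
    (hq0 : 0 < q) (hq1 : q < 1) :
    -(∑ y, η y * log (p y)) - (1 - c) * log (1 - q) - c * log q =
      bayesRisk K η c + (∑ y, η y * log (η y / p y)) +
        (c * log (c / q) + (1 - c) * log ((1 - c) / (1 - q))) := by
  have hsplit : ∑ y, η y * log (η y / p y) = ∑ y, η y * log (η y) - ∑ y, η y * log (p y) := by
    rw [← sum_sub_distrib]
    exact sum_congr rfl fun y _ => by rw [log_div (hη y).ne' (hp y).ne']; ring
  rw [bayesRisk, hsplit, log_div hc0.ne' hq0.ne',
    log_div (sub_pos.2 hc1).ne' (sub_pos.2 hq1).ne']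
  ring

section asoftmax

variable {K : ℕ}

lemma asoftmax_castSucc (u : Fin (K + 1) → ℝ) (y : Fin K) :
    asoftmax K u y.castSucc = exp (u y.castSucc) / ∑ y' : Fin K, exp (u y'.castSucc) := by
  rw [asoftmax, if_neg (Fin.castSucc_lt_last y).ne]

lemma asoftmax_last (u : Fin (K + 1) → ℝ) :
    asoftmax K u (Fin.last K) = exp (u (Fin.last K)) /
      ((∑ y : Fin K, exp (u y.castSucc)) - (⨆ y : Fin K, exp (u y.castSucc)) +
        exp (u (Fin.last K))) := by
  rw [asoftmax, if_pos rfl, Fin.sum_univ_castSucc]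
  ring_nf

lemma asoftmax_castSucc_pos (hK : 0 < K) (u : Fin (K + 1) → ℝ) (y : Fin K) :
    0 < asoftmax K u y.castSucc := by
  have : Nonempty (Fin K) := Fin.pos_iff_nonempty.1 hK
  rw [asoftmax_castSucc]
  exact div_pos (exp_pos _) (sum_pos (fun _ _ => exp_pos _) univ_nonempty)

lemma sum_asoftmax_castSucc (hK : 0 < K) (u : Fin (K + 1) → ℝ) :
    ∑ y : Fin K, asoftmax K u y.castSucc = 1 := by
  have : Nonempty (Fin K) := Fin.pos_iff_nonempty.1 hK
  simp only [asoftmax_castSucc]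
  rw [← sum_div, div_self (sum_pos (fun _ _ => exp_pos _) univ_nonempty).ne']

lemma asoftmax_last_mem_Ioo (hK : 1 < K) (u : Fin (K + 1) → ℝ) :
    asoftmax K u (Fin.last K) ∈ Set.Ioo 0 1 := by
  have hgap := ciSup_lt_sum (by simpa using hK) fun y : Fin K => exp_pos (u y.castSucc)
  have he := exp_pos (u (Fin.last K))
  rw [asoftmax_last]
  exact ⟨div_pos he (by linarith), (div_lt_one (by linarith)).2 (by linarith)⟩

lemma exists_asoftmax_eq (hK : 1 < K) {p : Fin K → ℝ} (hp : ∀ y, 0 < p y)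
    (hsum : ∑ y, p y = 1) {q : ℝ} (hq0 : 0 < q) (hq1 : q < 1) :
    ∃ v : Fin (K + 1) → ℝ,
      (∀ y, asoftmax K v y.castSucc = p y) ∧ asoftmax K v (Fin.last K) = q := by
  set m := ⨆ y, p y with hm_def
  have hm : m < 1 := hsum ▸ ciSup_lt_sum (by simpa using hK) hp
  -- the last logit solves `e / (1 - m + e) = q`
  have he : 0 < q * (1 - m) / (1 - q) := div_pos (by nlinarith) (by linarith)
  refine ⟨Fin.lastCases (log (q * (1 - m) / (1 - q))) (fun y => log (p y)), fun y => ?_, ?_⟩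
  · simp only [asoftmax_castSucc, Fin.lastCases_castSucc, exp_log (hp _), hsum, div_one]
  · simp only [asoftmax_last, Fin.lastCases_castSucc, Fin.lastCases_last, exp_log (hp _),
      exp_log he, hsum, ← hm_def]
    have : 1 - q ≠ 0 := (sub_pos.2 hq1).ne'
    have : 1 - m ≠ 0 := (sub_pos.2 hm).ne'
    field_simp
    ring

end asoftmax

lemma condRisk_eq_bayesRisk_add {K : ℕ} (hK : 1 < K) {η : Fin K → ℝ} (hη : ∀ y, 0 < η y)
    {c : ℝ} (hc0 : 0 < c) (hc1 : c < 1) (u : Fin (K + 1) → ℝ) :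
    condRisk K η c u = bayesRisk K η c +
      (∑ y : Fin K, η y * log (η y / asoftmax K u y.castSucc)) +
        (c * log (c / asoftmax K u (Fin.last K)) +
          (1 - c) * log ((1 - c) / (1 - asoftmax K u (Fin.last K)))) :=
  have hq := asoftmax_last_mem_Ioo hK u
  cross_entropy_eq_bayesRisk_add hη (asoftmax_castSucc_pos (by omega) u) hc0 hc1 hq.1 hq.2

lemma iInf_condRisk {K : ℕ} (hK : 1 < K) {η : Fin K → ℝ} (hη : ∀ y, 0 < η y)
    (hsum : ∑ y, η y = 1) {c : ℝ} (hc0 : 0 < c) (hc1 : c < 1) :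
    ⨅ v, condRisk K η c v = bayesRisk K η c := by
  have hle : ∀ v, bayesRisk K η c ≤ condRisk K η c v := fun v => by
    have hq := asoftmax_last_mem_Ioo hK v
    have hKL := sum_mul_log_div_nonneg univ (fun y _ => hη y)
      (fun y _ => asoftmax_castSucc_pos (by omega) v y)
      (by rw [sum_asoftmax_castSucc (by omega), hsum])
    have hkl := binary_mul_log_div_nonneg hc0 hc1 hq.1 hq.2
    rw [condRisk_eq_bayesRisk_add hK hη hc0 hc1]
    linarith
  obtain ⟨v, hvη, hvc⟩ := exists_asoftmax_eq hK hη hsum hc0 hc1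
  have hv : condRisk K η c v = bayesRisk K η c := by
    simp [condRisk_eq_bayesRisk_add hK hη hc0 hc1, hvη, hvc, (hη _).ne', (sub_pos.2 hc1).ne']
  exact le_antisymm (hv ▸ ciInf_le ⟨_, Set.forall_mem_range.2 hle⟩ v) (le_ciInf hle)

/-- the excess conditional risk of the asymmetric softmax loss
decomposes as a multiclass KL divergence plus a binary KL divergence. -/
theorem excess_condRisk_eq_KL (K : ℕ) (hK : 1 < K)
    (η : Fin K → ℝ) (hpos : ∀ y, 0 < η y) (hsum : ∑ y, η y = 1)
    (c : ℝ) (hc0 : 0 < c) (hc1 : c < 1) (u : Fin (K + 1) → ℝ) :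
    condRisk K η c u - (⨅ v : Fin (K + 1) → ℝ, condRisk K η c v) =
      (∑ y : Fin K, η y * Real.log (η y / asoftmax K u y.castSucc)) +
        (c * Real.log (c / asoftmax K u (Fin.last K)) +
          (1 - c) * Real.log ((1 - c) / (1 - asoftmax K u (Fin.last K)))) := by
  rw [iInf_condRisk hK hpos hsum hc0 hc1, condRisk_eq_bayesRisk_add hK hpos hc0 hc1 u]
  ring
end

section
/- Surjectivity onto the target range: for every η ∈ Δ^K with strictly positive coordinates and every c ∈ (0,1), there exists u ∈ R^{K+1} such that ψ̃_y(u) = η_y for all y ∈ {1,...,K} and ψ̃_{K+1}(u) = c. Explicitly, one may take u_y = log η_y for y ≤ K and u_{K+1} = log(c(1 − max_y η_y)/(1−c)). -/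
open Finset

theorem ciSup_lt_sum_of_pos {ι : Type*} [Fintype ι] [Nontrivial ι] {f : ι → ℝ}
    (hf : ∀ i, 0 < f i) : ⨆ i, f i < ∑ i, f i := by
  obtain ⟨i, hi⟩ := exists_eq_ciSup_of_finite (f := f)
  obtain ⟨j, hji⟩ := exists_ne i
  rw [← hi]
  exact single_lt_sum hji (mem_univ _) (mem_univ _) (hf j) fun k _ _ => (hf k).le

namespace asoftmax

variable {K : ℕ} (v : Fin K → ℝ) (a : ℝ)

theorem snoc_castSucc (y : Fin K) :
    asoftmax K (Fin.snoc v a) y.castSucc = Real.exp (v y) / ∑ y', Real.exp (v y') := by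
  simp [asoftmax, (Fin.castSucc_lt_last y).ne]

theorem snoc_last :
    asoftmax K (Fin.snoc v a) (Fin.last K) =
      Real.exp a / (∑ y', Real.exp (v y') + Real.exp a - ⨆ y', Real.exp (v y')) := by
  simp [asoftmax, Fin.sum_univ_castSucc]

end asoftmax

theorem div_one_add_sub_eq_of_eq_div {M b c : ℝ} (hM : M < 1) (hc : c < 1)
    (hb : b = c * (1 - M) / (1 - c)) : b / (1 + b - M) = c := by
  have h1M : 1 - M ≠ 0 := by linarith
  have h1c : 1 - c ≠ 0 := by linarith
  have hden : 1 + b - M = (1 - M) / (1 - c) := by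
    rw [hb]
    field_simp
    ring
  rw [hden, hb, div_div_div_cancel_right₀ h1c, mul_div_cancel_right₀ c h1M]

/-- surjectivity of the asymmetric softmax onto Δ^K × (0,1): the
explicit choice u_y = log η_y (y ≤ K), u_{K+1} = log(c(1 − max_y η_y)/(1−c))
recovers (η, c). -/
theorem asoftmax_surjective_onto_target (K : ℕ) (hK : 1 < K)
    (η : Fin K → ℝ) (hpos : ∀ y, 0 < η y) (hsum : ∑ y, η y = 1)
    (c : ℝ) (hc0 : 0 < c) (hc1 : c < 1) :
    ∃ u : Fin (K + 1) → ℝ,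
      u = Fin.snoc (fun y => Real.log (η y))
            (Real.log (c * (1 - ⨆ y, η y) / (1 - c))) ∧
      (∀ y : Fin K, asoftmax K u y.castSucc = η y) ∧
      asoftmax K u (Fin.last K) = c := by
  have : Nontrivial (Fin K) := Fin.nontrivial_iff_two_le.mpr hK
  have hexp (y : Fin K) : Real.exp (Real.log (η y)) = η y := Real.exp_log (hpos y)
  have hmax : ⨆ y, η y < 1 := hsum ▸ ciSup_lt_sum_of_pos hpos
  have hb : 0 < c * (1 - ⨆ y, η y) / (1 - c) :=
    div_pos (mul_pos hc0 (by linarith)) (by linarith)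
  refine ⟨_, rfl, fun y => ?_, ?_⟩
  · simp only [asoftmax.snoc_castSucc, hexp, hsum, div_one]
  · simp only [asoftmax.snoc_last, hexp, hsum, Real.exp_log hb]
    exact div_one_add_sub_eq_of_eq_div hmax hc1 rfl
end
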